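/- Let p = 1 ≤ q < ∞, let v, w be weights on (a,b), and suppose that C > 0 is such that (∫_a^b (∫_a^t f)^q w(t) dt)^{1/q} ≤ C ∫_a^b f v holds for all f ∈ M⁺(a,b). Then for every ε > 0 there is a constant c, depending only on q and ε, such that (∫_a^t V^{(ε+1)q} w)^{1/q} ≤ c · C · V(t)^ε for every t ∈ (a,b); in particular A_ε ≤ c·C < ∞ for every ε > 0. -/

import Mathlib

open MeasureTheory Set Filter
open scoped ENNReal Topology

/-- The open subinterval of `ℝ` with extended-real endpoints `a` and `b`. -/
def EIoo (a b : EReal) : Set ℝ := {x : ℝ | a < (x : EReal) ∧ (x : EReal) < b}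

/-- A weight on `(a,b)`: a measurable function which is positive and finite a.e. on `(a,b)`. -/
def IsWeight (a b : EReal) (v : ℝ → ℝ≥0∞) : Prop :=
  Measurable v ∧ ∀ᵐ x ∂(volume.restrict (EIoo a b)), v x ≠ 0 ∧ v x ≠ ∞

/-- The function `V` in the case `1 < p`:  `V(t) = (∫_a^t v^{1-p'})^{1/p'}`, `p' = p/(p-1)`. -/
noncomputable def Vp (a : EReal) (p : ℝ) (v : ℝ → ℝ≥0∞) (t : ℝ) : ℝ≥0∞ :=
  (∫⁻ s in EIoo a (t : EReal), v s ^ (1 - p / (p - 1))) ^ ((p - 1) / p)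

/-- The function `V` in the case `p = 1`:  `V(t) = ess sup_{s ∈ (a,t)} 1/v(s)`. -/
noncomputable def V1 (a : EReal) (v : ℝ → ℝ≥0∞) (t : ℝ) : ℝ≥0∞ :=
  essSup (fun s => (v s)⁻¹) (volume.restrict (EIoo a (t : EReal)))

/-- `A_ε = sup_{t ∈ (a,b)} V(t)^{-ε} (∫_a^t V^{q(ε+1)} w)^{1/q}`. -/
noncomputable def Aeps (a b : EReal) (q ε : ℝ) (V w : ℝ → ℝ≥0∞) : ℝ≥0∞ :=
  ⨆ t ∈ EIoo a b,
    V t ^ (-ε) * (∫⁻ s in EIoo a (t : EReal), V s ^ (q * (ε + 1)) * w s) ^ (1 / q)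

/-- `B_{1,ε} = (∫_a^b (∫_a^t V^{q(ε+1)} w)^{r/p} V(t)^{q(ε+1)-εr} w(t) dt)^{1/r}`. -/
noncomputable def B1 (a b : EReal) (p q r ε : ℝ) (V w : ℝ → ℝ≥0∞) : ℝ≥0∞ :=
  (∫⁻ t in EIoo a b,
      (∫⁻ s in EIoo a (t : EReal), V s ^ (q * (ε + 1)) * w s) ^ (r / p) *
        (V t ^ (q * (ε + 1) - ε * r) * w t)) ^ (1 / r)

/-- The weighted Hardy inequality with constant `C`, case `p > 1`
(`RHS = C (∫_a^b f^p v)^{1/p}`). -/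
def HardyP (a b : EReal) (p q : ℝ) (v w : ℝ → ℝ≥0∞) (C : ℝ≥0∞) : Prop :=
  ∀ f : ℝ → ℝ≥0∞, Measurable f →
    (∫⁻ t in EIoo a b, (∫⁻ s in EIoo a (t : EReal), f s) ^ q * w t) ^ (1 / q)
      ≤ C * (∫⁻ x in EIoo a b, f x ^ p * v x) ^ (1 / p)

/-- The weighted Hardy inequality with constant `C`, case `p = 1`
(`RHS = C ∫_a^b f v`). -/
def Hardy1 (a b : EReal) (q : ℝ) (v w : ℝ → ℝ≥0∞) (C : ℝ≥0∞) : Prop :=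
  ∀ f : ℝ → ℝ≥0∞, Measurable f →
    (∫⁻ t in EIoo a b, (∫⁻ s in EIoo a (t : EReal), f s) ^ q * w t) ^ (1 / q)
      ≤ C * ∫⁻ x in EIoo a b, f x * v x

/-- `A_ε < ∞`, including the requirement that every subexpression (in particular
`V(t)` and the inner integral) is finite for every `t ∈ (a,b)`. -/
def AFin (a b : EReal) (q ε : ℝ) (V w : ℝ → ℝ≥0∞) : Prop :=
  (∀ t ∈ EIoo a b,
      V t ≠ ∞ ∧ (∫⁻ s in EIoo a (t : EReal), V s ^ (q * (ε + 1)) * w s) ≠ ∞) ∧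
    Aeps a b q ε V w ≠ ∞

/-- `B_{1,ε} < ∞`, including the requirement that every subexpression (in particular
`V(t)` and the inner integral) is finite for every `t ∈ (a,b)`. -/
def B1Fin (a b : EReal) (p q r ε : ℝ) (V w : ℝ → ℝ≥0∞) : Prop :=
  (∀ t ∈ EIoo a b,
      V t ≠ ∞ ∧ (∫⁻ s in EIoo a (t : EReal), V s ^ (q * (ε + 1)) * w s) ≠ ∞) ∧
    B1 a b p q r ε V w ≠ ∞

/-!
If `λ < V(x)`, then `1/v > λ` on a set `E ⊆ (a,x)` of positive finite measure, and the Hardy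
inequality tested on `f = 𝟙_E / |E|` (for which `∫_a^t f = 1` when `t > x`) gives
`∫_x^b w ≤ (C/λ)^q`. Since every point of `{s ∈ (a,t) : λ < V(s)}` lies to the right of another
point of this set, except possibly its minimum, this bounds the `w`-measure of the level set
by `C^q λ^{-q}`. Splitting `(a,t)` into the dyadic layers `V(t) 2^{-k-1} < V ≤ V(t) 2^{-k}` and
summing the geometric series then yields `∫_a^t V^{q(ε+1)} w ≤ c^q C^q V(t)^{qε}`.
-/

theorem measure_le_of_forall_measure_inter_Ioi_le {μ : Measure ℝ} [NullSingletonClass μ]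
    {S : Set ℝ} {B : ℝ≥0∞} (h : ∀ x ∈ S, μ (S ∩ Ioi x) ≤ B) : μ S ≤ B := by
  set R : Set ℚ := {r | ∃ x ∈ S, x ≤ r}
  have hmin : {x ∈ S | ∀ y ∈ S, x ≤ y}.Subsingleton := fun x hx y hy =>
    le_antisymm (hx.2 y hy.1) (hy.2 x hx.1)
  have hcover : S ⊆ {x ∈ S | ∀ y ∈ S, x ≤ y} ∪ ⋃ r ∈ R, S ∩ Ioi (r : ℝ) := by
    intro s hs
    by_cases hm : ∀ y ∈ S, s ≤ y
    · exact Or.inl ⟨hs, hm⟩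
    · push Not at hm
      obtain ⟨y, hy, hys⟩ := hm
      obtain ⟨r, hyr, hrs⟩ := exists_rat_btwn hys
      exact Or.inr (mem_biUnion (x := r) ⟨y, hy, hyr.le⟩ ⟨hs, hrs⟩)
  have hdir : DirectedOn (Function.onFun (· ⊆ ·) fun r : ℚ => S ∩ Ioi (r : ℝ)) R := by
    intro r₁ h₁ r₂ h₂
    refine ⟨min r₁ r₂, ?_, ?_, ?_⟩
    · rcases min_choice r₁ r₂ with h | h <;> rw [h] <;> assumption
    · exact inter_subset_inter_right _ (Ioi_subset_Ioi (by exact_mod_cast min_le_left r₁ r₂))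
    · exact inter_subset_inter_right _ (Ioi_subset_Ioi (by exact_mod_cast min_le_right r₁ r₂))
  calc μ S ≤ μ {x ∈ S | ∀ y ∈ S, x ≤ y} + μ (⋃ r ∈ R, S ∩ Ioi (r : ℝ)) :=
        (measure_mono hcover).trans (measure_union_le _ _)
    _ = ⨆ r ∈ R, μ (S ∩ Ioi (r : ℝ)) := by
        rw [hmin.measure_zero, zero_add, measure_biUnion_eq_iSup R.to_countable hdir]
    _ ≤ B := iSup₂_le fun r ⟨x, hx, hxr⟩ =>
        (measure_mono (inter_subset_inter_right _ (Ioi_subset_Ioi hxr))).trans (h x hx)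

theorem exists_dyadic_level {X y : ℝ≥0∞} (hX : X ≠ ∞) (hy : y ≠ 0) (hyX : y ≤ X) :
    ∃ k : ℕ, X * 2⁻¹ ^ (k + 1) < y ∧ y ≤ X * 2⁻¹ ^ k := by
  have hlim : Tendsto (fun k : ℕ => X * 2⁻¹ ^ (k + 1)) atTop (𝓝 0) := by
    simpa using ENNReal.Tendsto.const_mul
      ((ENNReal.tendsto_pow_atTop_nhds_zero_of_lt_one (by norm_num : (2 : ℝ≥0∞)⁻¹ < 1)).comp
        (tendsto_add_atTop_nat 1)) (Or.inr hX)
  have hex : ∃ k : ℕ, X * 2⁻¹ ^ (k + 1) < y :=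
    (hlim.eventually_lt_const (pos_iff_ne_zero.2 hy)).exists
  refine ⟨Nat.find hex, Nat.find_spec hex, ?_⟩
  cases hk : Nat.find hex with
  | zero => simpa using hyX
  | succ j => exact not_lt.1 (Nat.find_min hex (hk ▸ Nat.lt_succ_self j))

theorem rpow_le_tsum_dyadic_indicator {α : Type*} {f : α → ℝ≥0∞} {X : ℝ≥0∞} {r : ℝ}
    (hr : 0 < r) (hX : X ≠ ∞) {x : α} (hx : f x ≤ X) :
    f x ^ r ≤ ∑' k : ℕ, (X * 2⁻¹ ^ k) ^ r * {y | X * 2⁻¹ ^ (k + 1) < f y}.indicator 1 x := by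
  rcases eq_or_ne (f x) 0 with h0 | h0
  · rw [h0, ENNReal.zero_rpow_of_pos hr]
    exact zero_le
  obtain ⟨k, hk₁, hk₂⟩ := exists_dyadic_level hX h0 hx
  calc f x ^ r ≤ (X * 2⁻¹ ^ k) ^ r := ENNReal.rpow_le_rpow hk₂ hr.le
    _ = (X * 2⁻¹ ^ k) ^ r * {y | X * 2⁻¹ ^ (k + 1) < f y}.indicator 1 x := by
        rw [indicator_of_mem (show x ∈ {y | X * 2⁻¹ ^ (k + 1) < f y} from hk₁), Pi.one_apply,
          mul_one]
    _ ≤ _ := ENNReal.le_tsum k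

theorem dyadic_term_eq {X : ℝ≥0∞} (hX₀ : X ≠ 0) (hX : X ≠ ∞) (q r : ℝ) (k : ℕ) :
    (X * 2⁻¹ ^ k) ^ r * (X * 2⁻¹ ^ (k + 1)) ^ (-q)
      = 2 ^ q * X ^ (r - q) * (2 ^ (-(r - q))) ^ k := by
  have two_pow : ∀ n : ℕ, (2⁻¹ : ℝ≥0∞) ^ n = 2 ^ (-(n : ℝ)) := fun n => by
    rw [ENNReal.rpow_neg, ENNReal.rpow_natCast, ENNReal.inv_pow]
  have two_rpow_ne_top : ∀ s : ℝ, (2 : ℝ≥0∞) ^ s ≠ ∞ := fun s =>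
    ENNReal.rpow_ne_top_of_ne_zero two_ne_zero ENNReal.ofNat_ne_top
  rw [two_pow, two_pow, ENNReal.mul_rpow_of_ne_top hX (two_rpow_ne_top _),
    ENNReal.mul_rpow_of_ne_top hX (two_rpow_ne_top _), ← ENNReal.rpow_mul, ← ENNReal.rpow_mul,
    ← ENNReal.rpow_natCast, ← ENNReal.rpow_mul]
  calc X ^ r * 2 ^ (-(k : ℝ) * r) * (X ^ (-q) * 2 ^ (-((k + 1 : ℕ) : ℝ) * -q))
      = (X ^ r * X ^ (-q)) * (2 ^ (-(k : ℝ) * r) * 2 ^ (-((k + 1 : ℕ) : ℝ) * -q)) := by ring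
    _ = X ^ (r - q) * 2 ^ (q + -(r - q) * k) := by
        rw [← ENNReal.rpow_add _ _ hX₀ hX, ← ENNReal.rpow_add _ _ two_ne_zero ENNReal.ofNat_ne_top]
        push_cast
        ring_nf
    _ = 2 ^ q * X ^ (r - q) * 2 ^ (-(r - q) * k) := by
        rw [ENNReal.rpow_add _ _ two_ne_zero ENNReal.ofNat_ne_top]
        ring

noncomputable def dyadicConst (q s : ℝ) : ℝ≥0∞ := 2 ^ q * (1 - 2 ^ (-s))⁻¹

theorem dyadicConst_ne_zero (q s : ℝ) : dyadicConst q s ≠ 0 :=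
  mul_ne_zero (ENNReal.rpow_pos (by norm_num) ENNReal.ofNat_ne_top).ne'
    (ENNReal.inv_ne_zero.2 (ne_top_of_le_ne_top ENNReal.one_ne_top tsub_le_self))

theorem dyadicConst_ne_top (q : ℝ) {s : ℝ} (hs : 0 < s) : dyadicConst q s ≠ ∞ := by
  have hlt : (2 : ℝ≥0∞) ^ (-s) < 1 :=
    ENNReal.rpow_lt_one_of_one_lt_of_neg (by norm_num) (neg_neg_of_pos hs)
  exact ENNReal.mul_ne_top (ENNReal.rpow_ne_top_of_ne_zero two_ne_zero ENNReal.ofNat_ne_top)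
    (ENNReal.inv_ne_top.2 (tsub_pos_of_lt hlt).ne')

theorem lintegral_rpow_le_of_meas_lt_le {α : Type*} [MeasurableSpace α] {μ : Measure α}
    {f : α → ℝ≥0∞} (hf : Measurable f) {X K : ℝ≥0∞} (hX : X ≠ ∞) (hfX : ∀ᵐ x ∂μ, f x ≤ X)
    {q r : ℝ} (hr : 0 < r) (hK : ∀ l, μ {x | l < f x} ≤ K * l ^ (-q)) :
    ∫⁻ x, f x ^ r ∂μ ≤ dyadicConst q (r - q) * K * X ^ (r - q) := by
  rcases eq_or_ne X 0 with rfl | hX₀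
  · have hzero : (fun x => f x ^ r) =ᵐ[μ] fun _ => 0 := hfX.mono fun x hx => by
      simp only [le_zero_iff.1 hx, ENNReal.zero_rpow_of_pos hr]
    rw [lintegral_congr_ae hzero, lintegral_zero]
    exact zero_le
  have hlayer : ∀ k : ℕ, Measurable ({y | X * 2⁻¹ ^ (k + 1) < f y}.indicator (1 : α → ℝ≥0∞)) :=
    fun k => measurable_one.indicator (measurableSet_lt measurable_const hf)
  calc ∫⁻ x, f x ^ r ∂μ
      ≤ ∫⁻ x, ∑' k : ℕ, (X * 2⁻¹ ^ k) ^ r * {y | X * 2⁻¹ ^ (k + 1) < f y}.indicator 1 x ∂μ :=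
        lintegral_mono_ae (hfX.mono fun x hx => rpow_le_tsum_dyadic_indicator hr hX hx)
    _ = ∑' k : ℕ, (X * 2⁻¹ ^ k) ^ r * μ {y | X * 2⁻¹ ^ (k + 1) < f y} := by
        rw [lintegral_tsum fun k => ((hlayer k).const_mul _).aemeasurable]
        refine tsum_congr fun k => ?_
        rw [lintegral_const_mul _ (hlayer k),
          lintegral_indicator_one (measurableSet_lt measurable_const hf)]
    _ ≤ ∑' k : ℕ, (X * 2⁻¹ ^ k) ^ r * (K * (X * 2⁻¹ ^ (k + 1)) ^ (-q)) :=
        ENNReal.tsum_le_tsum fun k => mul_le_mul_right (hK _) _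
    _ = ∑' k : ℕ, 2 ^ q * K * X ^ (r - q) * (2 ^ (-(r - q))) ^ k := by
        refine tsum_congr fun k => ?_
        rw [mul_left_comm, dyadic_term_eq hX₀ hX]
        ring
    _ = dyadicConst q (r - q) * K * X ^ (r - q) := by
        rw [ENNReal.tsum_mul_left, ENNReal.tsum_geometric, dyadicConst]
        ring

theorem measurableSet_EIoo (a b : EReal) : MeasurableSet (EIoo a b) :=
  measurableSet_Ioo.preimage measurable_coe_real_ereal

theorem EIoo_subset_EIoo {a a' b b' : EReal} (ha : a' ≤ a) (hb : b ≤ b') :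
    EIoo a b ⊆ EIoo a' b' := fun _ hx => ⟨ha.trans_lt hx.1, hx.2.trans_le hb⟩

theorem V1_mono (a : EReal) (v : ℝ → ℝ≥0∞) : Monotone (V1 a v) := fun _ _ h =>
  essSup_mono_measure' <|
    Measure.restrict_mono (EIoo_subset_EIoo le_rfl (by exact_mod_cast h)) le_rfl

namespace Hardy1

variable {a b : EReal} {q : ℝ} {v w : ℝ → ℝ≥0∞} {C : ℝ≥0∞}

theorem lintegral_EIoo_rpow_le (hH : Hardy1 a b q v w C) (hq : 0 < q) {x : ℝ} {E : Set ℝ}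
    (hE : MeasurableSet E) (hEx : E ⊆ EIoo a x) (hE₀ : volume E ≠ 0) (hE_top : volume E ≠ ∞) :
    (∫⁻ t in EIoo x b, w t) ^ (1 / q) ≤ C * ((volume E)⁻¹ * ∫⁻ s in E, v s) := by
  obtain ⟨s, hs⟩ := nonempty_of_measure_ne_zero hE₀
  have hax : a ≤ x := ((hEx hs).1.trans (hEx hs).2).le
  set f : ℝ → ℝ≥0∞ := E.indicator fun _ => (volume E)⁻¹
  have hprim : ∀ t ∈ EIoo x b, ∫⁻ s in EIoo a t, f s = 1 := fun t ht => by
    rw [lintegral_indicator_const₀ hE.nullMeasurableSet, Measure.restrict_apply hE,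
      inter_eq_self_of_subset_left (hEx.trans (EIoo_subset_EIoo le_rfl ht.1.le)),
      ENNReal.inv_mul_cancel hE₀ hE_top]
  have hLHS : ∫⁻ t in EIoo x b, w t ≤ ∫⁻ t in EIoo a b, (∫⁻ s in EIoo a t, f s) ^ q * w t :=
    calc ∫⁻ t in EIoo x b, w t
        = ∫⁻ t in EIoo x b, (∫⁻ s in EIoo a t, f s) ^ q * w t :=
          setLIntegral_congr_fun (measurableSet_EIoo _ _) fun t ht => by
            rw [hprim t ht, ENNReal.one_rpow, one_mul]
      _ ≤ _ := lintegral_mono_set (EIoo_subset_EIoo hax le_rfl)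
  have hRHS : ∫⁻ s in EIoo a b, f s * v s ≤ (volume E)⁻¹ * ∫⁻ s in E, v s :=
    calc ∫⁻ s in EIoo a b, f s * v s ≤ ∫⁻ s, E.indicator (fun s => (volume E)⁻¹ * v s) s := by
          simp_rw [f, ← indicator_mul_left]
          exact setLIntegral_le_lintegral _ _
      _ = (volume E)⁻¹ * ∫⁻ s in E, v s := by
          rw [lintegral_indicator hE, lintegral_const_mul' _ _ (ENNReal.inv_ne_top.2 hE₀)]
  calc (∫⁻ t in EIoo x b, w t) ^ (1 / q)
      ≤ (∫⁻ t in EIoo a b, (∫⁻ s in EIoo a t, f s) ^ q * w t) ^ (1 / q) :=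
        ENNReal.rpow_le_rpow hLHS (by positivity)
    _ ≤ C * ∫⁻ s in EIoo a b, f s * v s := hH f (measurable_const.indicator hE)
    _ ≤ C * ((volume E)⁻¹ * ∫⁻ s in E, v s) := mul_le_mul_right hRHS C

theorem lintegral_EIoo_le_of_lt_V1 (hH : Hardy1 a b q v w C) (hq : 0 < q) (hv : Measurable v)
    {x : ℝ} {l : ℝ≥0∞} (hl : l < V1 a v x) :
    ∫⁻ t in EIoo x b, w t ≤ C ^ q * l ^ (-q) := by
  have hmeas : MeasurableSet {s | l < (v s)⁻¹} := measurableSet_lt measurable_const hv.inv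
  have hpos : volume.restrict (EIoo a x) {s | l < (v s)⁻¹} ≠ 0 := fun h₀ =>
    hl.not_ge <| essSup_le_of_ae_le l <| by
      filter_upwards [measure_eq_zero_iff_ae_notMem.1 h₀] with s hs using not_lt.1 hs
  rw [Measure.restrict_apply hmeas] at hpos
  obtain ⟨E, hE, hEsub, hE₀, hE_top⟩ := Measure.exists_subset_measure_lt_top
    (hmeas.inter (measurableSet_EIoo _ _)) (pos_iff_ne_zero.2 hpos)
  have hv_le : ∫⁻ s in E, v s ≤ l⁻¹ * volume E := by
    rw [← setLIntegral_const]
    exact setLIntegral_mono measurable_const fun s hs =>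
      (ENNReal.lt_inv_iff_lt_inv.1 (hEsub hs).1).le
  have hroot : (∫⁻ t in EIoo x b, w t) ^ (1 / q) ≤ C * l⁻¹ :=
    calc (∫⁻ t in EIoo x b, w t) ^ (1 / q) ≤ C * ((volume E)⁻¹ * ∫⁻ s in E, v s) :=
          hH.lintegral_EIoo_rpow_le hq hE (hEsub.trans inter_subset_right) hE₀.ne' hE_top.ne
      _ ≤ C * ((volume E)⁻¹ * (l⁻¹ * volume E)) := by gcongr
      _ = C * l⁻¹ := by
          rw [← mul_assoc (volume E)⁻¹, mul_comm (volume E)⁻¹, mul_assoc,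
            ENNReal.inv_mul_cancel hE₀.ne' hE_top.ne, mul_one]
  calc ∫⁻ t in EIoo x b, w t = ((∫⁻ t in EIoo x b, w t) ^ (1 / q)) ^ q := by
        rw [← ENNReal.rpow_mul, one_div_mul_cancel hq.ne', ENNReal.rpow_one]
    _ ≤ (C * l⁻¹) ^ q := ENNReal.rpow_le_rpow hroot hq.le
    _ = C ^ q * l ^ (-q) := by
        rw [ENNReal.mul_rpow_of_nonneg _ _ hq.le, ENNReal.inv_rpow, ENNReal.rpow_neg]

theorem withDensity_setOf_lt_V1_le (hH : Hardy1 a b q v w C) (hq : 0 < q) (hv : Measurable v)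
    {t : ℝ} (ht : (t : EReal) ≤ b) (l : ℝ≥0∞) :
    (volume.restrict (EIoo a t)).withDensity w {s | l < V1 a v s} ≤ C ^ q * l ^ (-q) := by
  rw [withDensity_apply', Measure.restrict_restrict' (measurableSet_EIoo _ _),
    ← withDensity_apply']
  refine measure_le_of_forall_measure_inter_Ioi_le fun x hx => ?_
  calc volume.withDensity w (({s | l < V1 a v s} ∩ EIoo a t) ∩ Ioi x)
      ≤ volume.withDensity w (EIoo x b) := measure_mono fun s hs =>
        ⟨by exact_mod_cast hs.2, hs.1.2.2.trans_le ht⟩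
    _ = ∫⁻ s in EIoo x b, w s := withDensity_apply' _ _
    _ ≤ C ^ q * l ^ (-q) := hH.lintegral_EIoo_le_of_lt_V1 hq hv hx.1

theorem lintegral_V1_rpow_mul_le (hH : Hardy1 a b q v w C) (hq : 0 < q) {ε : ℝ} (hε : 0 < ε)
    (hv : Measurable v) (hw : Measurable w) {t : ℝ} (ht : (t : EReal) ≤ b)
    (hVt : V1 a v t ≠ ∞) :
    ∫⁻ s in EIoo a t, V1 a v s ^ (q * (ε + 1)) * w s
      ≤ dyadicConst q (q * ε) * C ^ q * V1 a v t ^ (q * ε) := by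
  have hVmeas : Measurable (V1 a v) := (V1_mono a v).measurable
  have hle : ∀ᵐ s ∂(volume.restrict (EIoo a t)).withDensity w, V1 a v s ≤ V1 a v t :=
    (withDensity_absolutelyContinuous _ w).ae_le <|
      ae_restrict_of_forall_mem (measurableSet_EIoo _ _) fun s hs =>
        V1_mono a v (EReal.coe_lt_coe_iff.1 hs.2).le
  have hexp : q * (ε + 1) - q = q * ε := by ring
  calc ∫⁻ s in EIoo a t, V1 a v s ^ (q * (ε + 1)) * w s
      = ∫⁻ s, V1 a v s ^ (q * (ε + 1)) ∂(volume.restrict (EIoo a t)).withDensity w := by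
        rw [lintegral_withDensity_eq_lintegral_mul _ hw (hVmeas.pow_const _)]
        simp_rw [Pi.mul_apply, mul_comm (w _)]
    _ ≤ dyadicConst q (q * ε) * C ^ q * V1 a v t ^ (q * ε) := by
        rw [← hexp]
        exact lintegral_rpow_le_of_meas_lt_le hVmeas hVt hle (by positivity)
          (hH.withDensity_setOf_lt_V1_le hq hv ht)

theorem lintegral_V1_rpow_mul_rpow_le (hH : Hardy1 a b q v w C) (hq : 0 < q) {ε : ℝ}
    (hε : 0 < ε) (hv : Measurable v) (hw : Measurable w) (hC : C ≠ 0) {t : ℝ}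
    (ht : (t : EReal) ≤ b) :
    (∫⁻ s in EIoo a t, V1 a v s ^ (q * (ε + 1)) * w s) ^ (1 / q)
      ≤ dyadicConst q (q * ε) ^ (1 / q) * C * V1 a v t ^ ε := by
  rcases eq_or_ne (V1 a v t) ∞ with hVt | hVt
  · have hcC : dyadicConst q (q * ε) ^ (1 / q) * C ≠ 0 := mul_ne_zero
      (ENNReal.rpow_pos_of_nonneg (pos_iff_ne_zero.2 (dyadicConst_ne_zero _ _)) (by positivity)).ne'
      hC
    rw [hVt, ENNReal.top_rpow_of_pos hε, ENNReal.mul_top hcC]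
    exact le_top
  calc (∫⁻ s in EIoo a t, V1 a v s ^ (q * (ε + 1)) * w s) ^ (1 / q)
      ≤ (dyadicConst q (q * ε) * C ^ q * V1 a v t ^ (q * ε)) ^ (1 / q) :=
        ENNReal.rpow_le_rpow (hH.lintegral_V1_rpow_mul_le hq hε hv hw ht hVt) (by positivity)
    _ = dyadicConst q (q * ε) ^ (1 / q) * C * V1 a v t ^ ε := by
        rw [ENNReal.mul_rpow_of_nonneg _ _ (by positivity),
          ENNReal.mul_rpow_of_nonneg _ _ (by positivity), ← ENNReal.rpow_mul,
          ← ENNReal.rpow_mul, mul_one_div_cancel hq.ne', ENNReal.rpow_one,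
          mul_one_div, mul_div_cancel_left₀ _ hq.ne']

end Hardy1

theorem Aeps_le_of_forall_le {a b : EReal} {q ε : ℝ} {V w : ℝ → ℝ≥0∞} {K : ℝ≥0∞}
    (h : ∀ t ∈ EIoo a b, (∫⁻ s in EIoo a t, V s ^ (q * (ε + 1)) * w s) ^ (1 / q) ≤ K * V t ^ ε) :
    Aeps a b q ε V w ≤ K :=
  iSup₂_le fun t ht =>
    calc V t ^ (-ε) * (∫⁻ s in EIoo a t, V s ^ (q * (ε + 1)) * w s) ^ (1 / q)
        ≤ V t ^ (-ε) * (K * V t ^ ε) := mul_le_mul_right (h t ht) _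
      _ = K * ((V t ^ ε)⁻¹ * V t ^ ε) := by rw [ENNReal.rpow_neg]; ring
      _ ≤ K := mul_le_of_le_one_right' (ENNReal.inv_mul_le_one _)

/-- necessity in the convex case `p = 1 ≤ q < ∞`: if the Hardy inequality
holds with constant `C`, then `(∫_a^t V^{(ε+1)q} w)^{1/q} ≤ c·C·V(t)^ε` for all
`t ∈ (a,b)`; in particular `A_ε ≤ c·C < ∞`.  Here `c` depends only on `q, ε`. -/
theorem stmt5 (q : ℝ) (hq : 1 ≤ q) :
    ∀ ε : ℝ, 0 < ε → ∃ c : ℝ≥0∞, 0 < c ∧ c ≠ ∞ ∧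
      ∀ (a b : EReal), a < b →
        ∀ v w : ℝ → ℝ≥0∞, IsWeight a b v → IsWeight a b w →
          ∀ C : ℝ≥0∞, 0 < C → C ≠ ∞ → Hardy1 a b q v w C →
            (∀ t ∈ EIoo a b,
                (∫⁻ s in EIoo a (t : EReal), V1 a v s ^ (q * (ε + 1)) * w s) ^ (1 / q)
                  ≤ c * C * V1 a v t ^ ε) ∧
              Aeps a b q ε (V1 a v) w ≤ c * C := by
  intro ε hε
  have hq₀ : 0 < q := one_pos.trans_le hq
  have hqε : 0 < q * ε := mul_pos hq₀ hε
  refine ⟨dyadicConst q (q * ε) ^ (1 / q),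
    ENNReal.rpow_pos_of_nonneg (pos_iff_ne_zero.2 (dyadicConst_ne_zero _ _)) (by positivity),
    ENNReal.rpow_ne_top_of_nonneg (by positivity) (dyadicConst_ne_top q hqε), ?_⟩
  intro a b _ v w hv hw C hC _ hH
  have hbound := fun t (ht : t ∈ EIoo a b) =>
    hH.lintegral_V1_rpow_mul_rpow_le hq₀ hε hv.1 hw.1 hC.ne' ht.2.le
  exact ⟨hbound, Aeps_le_of_forall_le hbound⟩
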